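/- arXiv:1905.08472 — 6 statements merged into one kernel-verified Lean document; each statement's English description precedes it below -/
import Mathlib

section
/- Let X¹ and S¹ be the vector fields on ℝ × I × ℝ (coordinates (t,u,v)) given by X¹(t,u,v) = (ξ(t,u), η(t,u), η_t + (η_u − ξ_t)v − ξ_u·v²) and S¹(t,u,v) = (1, v, Σ_{k=0}^{n} f_k(u)v^k). Then the Lie bracket [X¹ − ξ·S¹, S¹], where [Y,Z](p) := (D_pZ)(Y(p)) − (D_pY)(Z(p)) and ξ·S¹ denotes pointwise scalar multiplication by ξ(t,u), equals at every point (t,u,v) the vector (0, 0, E(t,u,v)), where E(t,u,v) = (−η_tt + f_0'·η + f_1·η_t − f_0·η_u + 2f_0·ξ_t) + (ξ_tt − 2η_tu + f_1'·η + 2f_2·η_t + f_1·ξ_t + 3f_0·ξ_u)·v + (2ξ_tu − η_uu + f_2'·η + 3f_3·η_t + f_2·η_u + 2f_1·ξ_u)·v² + (ξ_uu + f_3'·η + 4f_4·η_t + 2f_3·η_u − f_3·ξ_t + f_2·ξ_u)·v³ + Σ_{k=4}^{n−1}(f_k'·η + (k+1)f_{k+1}·η_t + (k−1)f_k·η_u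 + (2−k)f_k·ξ_t + (4−k)f_{k−1}·ξ_u)·v^k + (f_n'·η + (n−1)f_n·η_u + (2−n)f_n·ξ_t + (4−n)f_{n−1}·ξ_u)·v^n + (3−n)f_n·ξ_u·v^{n+1}, with all f_k and their derivatives evaluated at u and ξ, η and their partial derivatives at (t,u). In particular, [X¹ − ξ·S¹, S¹] = 0 if and only if E(t,u,v) = 0 for all (t,u,v). -/
/-!
Write `F = ∑ f_k v^k` and `φ = η_t + (η_u - ξ_t) v - ξ_u v²`, so that
`X¹ - ξ S¹ = (0, η - ξ v, φ - ξ F)` while `S¹ = (1, v, F)`. In the bracket the first two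
components cancel and every term containing `ξ` itself drops out of the third, leaving
`η F_u + φ F_v + (2 ξ_t - η_u + 3 ξ_u v) F - (φ_t + v φ_u)`. By equality of mixed partials
`φ_t + v φ_u` is a cubic in `v`, and collecting powers of `v` gives `E`.
-/

/-- Partial derivative in the first (time) variable. -/
noncomputable def pt (φ : ℝ → ℝ → ℝ) (t u : ℝ) : ℝ := deriv (fun s => φ s u) t

/-- Partial derivative in the second (space) variable. -/
noncomputable def pu (φ : ℝ → ℝ → ℝ) (t u : ℝ) : ℝ := deriv (fun x => φ t x) u

/-- The expression `E(t,u,v)` from the symmetry condition. -/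
noncomputable def symE (n : ℕ) (f : ℕ → ℝ → ℝ) (ξ η : ℝ → ℝ → ℝ) (t u v : ℝ) : ℝ :=
  (-(pt (pt η) t u) + deriv (f 0) u * η t u + f 1 u * pt η t u - f 0 u * pu η t u
      + 2 * f 0 u * pt ξ t u)
  + (pt (pt ξ) t u - 2 * pu (pt η) t u + deriv (f 1) u * η t u + 2 * f 2 u * pt η t u
      + f 1 u * pt ξ t u + 3 * f 0 u * pu ξ t u) * v
  + (2 * pu (pt ξ) t u - pu (pu η) t u + deriv (f 2) u * η t u + 3 * f 3 u * pt η t u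
      + f 2 u * pu η t u + 2 * f 1 u * pu ξ t u) * v ^ 2
  + (pu (pu ξ) t u + deriv (f 3) u * η t u + 4 * f 4 u * pt η t u + 2 * f 3 u * pu η t u
      - f 3 u * pt ξ t u + f 2 u * pu ξ t u) * v ^ 3
  + (∑ k ∈ Finset.Icc 4 (n - 1),
      (deriv (f k) u * η t u + ((k : ℝ) + 1) * f (k + 1) u * pt η t u
        + ((k : ℝ) - 1) * f k u * pu η t u + (2 - (k : ℝ)) * f k u * pt ξ t u
        + (4 - (k : ℝ)) * f (k - 1) u * pu ξ t u) * v ^ k)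
  + (deriv (f n) u * η t u + ((n : ℝ) - 1) * f n u * pu η t u
      + (2 - (n : ℝ)) * f n u * pt ξ t u + (4 - (n : ℝ)) * f (n - 1) u * pu ξ t u) * v ^ n
  + (3 - (n : ℝ)) * f n u * pu ξ t u * v ^ (n + 1)

/-- The first prolongation `X¹` of the vector field `ξ ∂t + η ∂u`, as a vector field on
`ℝ × ℝ × ℝ` with coordinates `(t, u, v)`. -/
noncomputable def X1fun (ξ η : ℝ → ℝ → ℝ) (p : ℝ × ℝ × ℝ) : ℝ × ℝ × ℝ :=
  (ξ p.1 p.2.1, η p.1 p.2.1,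
    pt η p.1 p.2.1 + (pu η p.1 p.2.1 - pt ξ p.1 p.2.1) * p.2.2 - pu ξ p.1 p.2.1 * p.2.2 ^ 2)

/-- The spray `S¹` of the Liénard-type equation, as a vector field on `ℝ × ℝ × ℝ`. -/
noncomputable def S1fun (n : ℕ) (f : ℕ → ℝ → ℝ) (p : ℝ × ℝ × ℝ) : ℝ × ℝ × ℝ :=
  (1, p.2.2, ∑ k ∈ Finset.range (n + 1), f k p.2.1 * p.2.2 ^ k)

/-- The Lie bracket `[Y,Z](p) = (D_p Z)(Y(p)) − (D_p Y)(Z(p))` of two vector fields. -/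
noncomputable def lieBracket (Y Z : ℝ × ℝ × ℝ → ℝ × ℝ × ℝ) (p : ℝ × ℝ × ℝ) : ℝ × ℝ × ℝ :=
  fderiv ℝ Z p (Y p) - fderiv ℝ Y p (Z p)

open Filter Topology

section Partials

variable {g : ℝ → ℝ → ℝ} {t u : ℝ}

lemma pt_eq_fderiv (hg : DifferentiableAt ℝ (Function.uncurry g) (t, u)) :
    pt g t u = fderiv ℝ (Function.uncurry g) (t, u) (1, 0) := by
  have hline : HasDerivAt (fun s => (s, u)) ((1 : ℝ), (0 : ℝ)) t :=
    (hasDerivAt_id t).prodMk (hasDerivAt_const t u)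
  exact (hg.hasFDerivAt.comp_hasDerivAt t hline).deriv

lemma pu_eq_fderiv (hg : DifferentiableAt ℝ (Function.uncurry g) (t, u)) :
    pu g t u = fderiv ℝ (Function.uncurry g) (t, u) (0, 1) := by
  have hline : HasDerivAt (fun x => (t, x)) ((0 : ℝ), (1 : ℝ)) u :=
    (hasDerivAt_const u t).prodMk (hasDerivAt_id u)
  exact (hg.hasFDerivAt.comp_hasDerivAt u hline).deriv

lemma hasFDerivAt_uncurry (hg : DifferentiableAt ℝ (Function.uncurry g) (t, u)) :
    HasFDerivAt (Function.uncurry g)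
      (pt g t u • ContinuousLinearMap.fst ℝ ℝ ℝ + pu g t u • ContinuousLinearMap.snd ℝ ℝ ℝ)
      (t, u) := by
  convert hg.hasFDerivAt using 1
  ext
  · simp [pt_eq_fderiv hg]
  · simp [pu_eq_fderiv hg]

variable {p : ℝ × ℝ}

lemma uncurry_pt_eventuallyEq (hg : ∀ᶠ q in 𝓝 p, DifferentiableAt ℝ (Function.uncurry g) q) :
    Function.uncurry (pt g) =ᶠ[𝓝 p] fun q => fderiv ℝ (Function.uncurry g) q (1, 0) :=
  hg.mono fun _ hq => pt_eq_fderiv hq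

lemma uncurry_pu_eventuallyEq (hg : ∀ᶠ q in 𝓝 p, DifferentiableAt ℝ (Function.uncurry g) q) :
    Function.uncurry (pu g) =ᶠ[𝓝 p] fun q => fderiv ℝ (Function.uncurry g) q (0, 1) :=
  hg.mono fun _ hq => pu_eq_fderiv hq

lemma ContDiffAt.eventually_differentiableAt {E F : Type*} [NormedAddCommGroup E]
    [NormedSpace ℝ E] [NormedAddCommGroup F] [NormedSpace ℝ F] {φ : E → F} {x : E} {m : ℕ}
    (hφ : ContDiffAt ℝ (m + 1) φ x) : ∀ᶠ y in 𝓝 x, DifferentiableAt ℝ φ y :=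
  (hφ.eventually (by simp)).mono fun _ hy => hy.differentiableAt (by simp)

lemma ContDiffAt.uncurry_pt {m : ℕ} (hg : ContDiffAt ℝ (m + 1) (Function.uncurry g) p) :
    ContDiffAt ℝ m (Function.uncurry (pt g)) p :=
  ((hg.fderiv_right le_rfl).clm_apply contDiffAt_const).congr_of_eventuallyEq
    (uncurry_pt_eventuallyEq hg.eventually_differentiableAt)

lemma ContDiffAt.uncurry_pu {m : ℕ} (hg : ContDiffAt ℝ (m + 1) (Function.uncurry g) p) :
    ContDiffAt ℝ m (Function.uncurry (pu g)) p :=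
  ((hg.fderiv_right le_rfl).clm_apply contDiffAt_const).congr_of_eventuallyEq
    (uncurry_pu_eventuallyEq hg.eventually_differentiableAt)

lemma pt_pu_comm (hg : ContDiffAt ℝ 2 (Function.uncurry g) (t, u)) :
    pt (pu g) t u = pu (pt g) t u := by
  have hd : DifferentiableAt ℝ (fderiv ℝ (Function.uncurry g)) (t, u) :=
    (hg.fderiv_right (m := 1) le_rfl).differentiableAt one_ne_zero
  have hsecond : ∀ w₁ w₂ : ℝ × ℝ,
      fderiv ℝ (fun q => fderiv ℝ (Function.uncurry g) q w₂) (t, u) w₁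
        = fderiv ℝ (fderiv ℝ (Function.uncurry g)) (t, u) w₁ w₂ := fun w₁ w₂ => by
    rw [fderiv_clm_apply hd (differentiableAt_const w₂)]
    simp
  rw [pt_eq_fderiv ((hg.uncurry_pu (m := 1)).differentiableAt one_ne_zero),
    pu_eq_fderiv ((hg.uncurry_pt (m := 1)).differentiableAt one_ne_zero),
    (uncurry_pu_eventuallyEq hg.eventually_differentiableAt).fderiv_eq,
    (uncurry_pt_eventuallyEq hg.eventually_differentiableAt).fderiv_eq, hsecond, hsecond]
  exact hg.isSymmSndFDerivAt (by simp) _ _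

end Partials

section Space

noncomputable def coordT : ℝ × ℝ × ℝ →L[ℝ] ℝ := ContinuousLinearMap.fst ℝ ℝ (ℝ × ℝ)

noncomputable def coordU : ℝ × ℝ × ℝ →L[ℝ] ℝ :=
  (ContinuousLinearMap.fst ℝ ℝ ℝ).comp (ContinuousLinearMap.snd ℝ ℝ (ℝ × ℝ))

noncomputable def coordV : ℝ × ℝ × ℝ →L[ℝ] ℝ :=
  (ContinuousLinearMap.snd ℝ ℝ ℝ).comp (ContinuousLinearMap.snd ℝ ℝ (ℝ × ℝ))

@[simp] lemma coordT_apply (p : ℝ × ℝ × ℝ) : coordT p = p.1 := rfl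
@[simp] lemma coordU_apply (p : ℝ × ℝ × ℝ) : coordU p = p.2.1 := rfl
@[simp] lemma coordV_apply (p : ℝ × ℝ × ℝ) : coordV p = p.2.2 := rfl

variable {t u v : ℝ}

lemma hasFDerivAt_comp_coordTU {g : ℝ → ℝ → ℝ}
    (hg : DifferentiableAt ℝ (Function.uncurry g) (t, u)) :
    HasFDerivAt (fun p : ℝ × ℝ × ℝ => g p.1 p.2.1) (pt g t u • coordT + pu g t u • coordU)
      (t, u, v) := by
  refine ((hasFDerivAt_uncurry hg).comp (t, u, v)
    (coordT.prod coordU).hasFDerivAt).congr_fderiv ?_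
  ext <;> simp

lemma hasFDerivAt_sum_mul_pow {f : ℕ → ℝ → ℝ} (s : Finset ℕ)
    (hf : ∀ k ∈ s, DifferentiableAt ℝ (f k) u) :
    HasFDerivAt (fun p : ℝ × ℝ × ℝ => ∑ k ∈ s, f k p.2.1 * p.2.2 ^ k)
      ((∑ k ∈ s, deriv (f k) u * v ^ k) • coordU
        + (∑ k ∈ s, (k : ℝ) * f k u * v ^ (k - 1)) • coordV) (t, u, v) := by
  have hterm : ∀ k ∈ s, HasFDerivAt (fun p : ℝ × ℝ × ℝ => f k p.2.1 * p.2.2 ^ k)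
      (f k u • ((k : ℝ) * v ^ (k - 1)) • coordV + v ^ k • deriv (f k) u • coordU) (t, u, v) := by
    intro k hk
    have hfk : HasFDerivAt (fun p : ℝ × ℝ × ℝ => f k p.2.1) (deriv (f k) u • coordU) (t, u, v) :=
      (hf k hk).hasDerivAt.comp_hasFDerivAt (t, u, v) coordU.hasFDerivAt
    have hpow : HasFDerivAt (fun p : ℝ × ℝ × ℝ => p.2.2 ^ k) (((k : ℝ) * v ^ (k - 1)) • coordV)
        (t, u, v) :=
      (hasDerivAt_pow k v).comp_hasFDerivAt (t, u, v) coordV.hasFDerivAt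
    exact hfk.mul hpow
  refine (HasFDerivAt.fun_sum hterm).congr_fderiv ?_
  ext <;>
  simp only [ContinuousLinearMap.comp_apply, ContinuousLinearMap.inl_apply,
    ContinuousLinearMap.inr_apply, sum_apply, add_apply, smul_apply, coordU_apply, coordV_apply,
    Prod.fst_zero, Prod.snd_zero, smul_eq_mul, mul_zero, mul_one, add_zero, zero_add,
    Finset.sum_const_zero] <;>
  exact Finset.sum_congr rfl fun _ _ => by ring

end Space

section Coefficients

variable (c : ℕ → ℝ) (v : ℝ)

lemma sum_range_mul_pow_eq {n : ℕ} (hn : 4 ≤ n) :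
    ∑ k ∈ Finset.range n, c k * v ^ k
      = c 0 + c 1 * v + c 2 * v ^ 2 + c 3 * v ^ 3 + ∑ k ∈ Finset.Icc 4 (n - 1), c k * v ^ k := by
  obtain ⟨m, rfl⟩ : ∃ m, n = m + 1 := ⟨n - 1, by omega⟩
  rw [Finset.range_eq_Ico, ← Finset.sum_Ico_consecutive _ (Nat.zero_le 4) hn, Nat.add_sub_cancel,
    Finset.Ico_add_one_right_eq_Icc]
  simp [Finset.sum_range_succ]

-- The `k = 0` term on the right is `c (0 - 1) = c 0` (truncated subtraction), hence the `- c 0`.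
lemma mul_sum_range_mul_pow (m : ℕ) :
    v * ∑ k ∈ Finset.range m, c k * v ^ k
      = ∑ k ∈ Finset.range (m + 1), c (k - 1) * v ^ k - c 0 := by
  rw [Finset.sum_range_succ', Finset.mul_sum]
  simp [pow_succ, mul_comm, mul_left_comm]

lemma mul_sum_range_natCast_mul_pow_sub_one (m : ℕ) :
    v * ∑ k ∈ Finset.range m, (k : ℝ) * c k * v ^ (k - 1)
      = ∑ k ∈ Finset.range m, (k : ℝ) * c k * v ^ k := by
  rw [Finset.mul_sum]
  refine Finset.sum_congr rfl fun k _ => ?_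
  rcases k with _ | k
  · simp
  · rw [Nat.add_sub_cancel, pow_succ]
    ring

lemma sum_range_succ_natCast_mul_pow_sub_one (m : ℕ) :
    ∑ k ∈ Finset.range (m + 1), (k : ℝ) * c k * v ^ (k - 1)
      = ∑ k ∈ Finset.range m, ((k : ℝ) + 1) * c (k + 1) * v ^ k := by
  simp [Finset.sum_range_succ']

end Coefficients

lemma symE_eq {n : ℕ} (hn : 4 ≤ n) (f : ℕ → ℝ → ℝ) (ξ η : ℝ → ℝ → ℝ) (t u v : ℝ) :
    symE n f ξ η t u v
      = η t u * ∑ k ∈ Finset.range (n + 1), deriv (f k) u * v ^ k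
        + (pt η t u + (pu η t u - pt ξ t u) * v - pu ξ t u * v ^ 2)
          * ∑ k ∈ Finset.range (n + 1), (k : ℝ) * f k u * v ^ (k - 1)
        + (2 * pt ξ t u - pu η t u + 3 * pu ξ t u * v) * ∑ k ∈ Finset.range (n + 1), f k u * v ^ k
        - (pt (pt η) t u + (2 * pu (pt η) t u - pt (pt ξ) t u) * v
          + (pu (pu η) t u - 2 * pu (pt ξ) t u) * v ^ 2 - pu (pu ξ) t u * v ^ 3) := by
  have hIcc : ∑ k ∈ Finset.Icc 4 (n - 1),
      (deriv (f k) u * η t u + ((k : ℝ) + 1) * f (k + 1) u * pt η t u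
        + ((k : ℝ) - 1) * f k u * pu η t u + (2 - (k : ℝ)) * f k u * pt ξ t u
        + (4 - (k : ℝ)) * f (k - 1) u * pu ξ t u) * v ^ k
      = η t u * ∑ k ∈ Finset.Icc 4 (n - 1), deriv (f k) u * v ^ k
        + pt η t u * ∑ k ∈ Finset.Icc 4 (n - 1), ((k : ℝ) + 1) * f (k + 1) u * v ^ k
        + (pu η t u - pt ξ t u) * ∑ k ∈ Finset.Icc 4 (n - 1), (k : ℝ) * f k u * v ^ k
        + (2 * pt ξ t u - pu η t u) * ∑ k ∈ Finset.Icc 4 (n - 1), f k u * v ^ k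
        + 3 * pu ξ t u * ∑ k ∈ Finset.Icc 4 (n - 1), f (k - 1) u * v ^ k
        - pu ξ t u * ∑ k ∈ Finset.Icc 4 (n - 1), ((k - 1 : ℕ) : ℝ) * f (k - 1) u * v ^ k := by
    simp only [Finset.mul_sum, ← Finset.sum_add_distrib, ← Finset.sum_sub_distrib]
    refine Finset.sum_congr rfl fun k hk => ?_
    rw [Nat.cast_sub (by simp at hk; omega)]
    ring
  have hvFv := mul_sum_range_natCast_mul_pow_sub_one (fun k => f k u) v (n + 1)
  -- Trading `v F_v` for `∑ k f_k v^k` leaves only sums `∑ c_k v^k`, which split like `symE`.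
  trans η t u * ∑ k ∈ Finset.range (n + 1), deriv (f k) u * v ^ k
      + pt η t u * ∑ k ∈ Finset.range (n + 1), (k : ℝ) * f k u * v ^ (k - 1)
      + (pu η t u - pt ξ t u) * ∑ k ∈ Finset.range (n + 1), (k : ℝ) * f k u * v ^ k
      - pu ξ t u * (v * ∑ k ∈ Finset.range (n + 1), (k : ℝ) * f k u * v ^ k)
      + (2 * pt ξ t u - pu η t u) * ∑ k ∈ Finset.range (n + 1), f k u * v ^ k
      + 3 * pu ξ t u * (v * ∑ k ∈ Finset.range (n + 1), f k u * v ^ k)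
      - (pt (pt η) t u + (2 * pu (pt η) t u - pt (pt ξ) t u) * v
        + (pu (pu η) t u - 2 * pu (pt ξ) t u) * v ^ 2 - pu (pu ξ) t u * v ^ 3)
  · rw [mul_sum_range_mul_pow (fun k => f k u), mul_sum_range_mul_pow (fun k => (k : ℝ) * f k u),
      sum_range_succ_natCast_mul_pow_sub_one]
    simp only [Finset.sum_range_succ, sum_range_mul_pow_eq _ _ hn]
    rw [symE, hIcc, Nat.cast_pred (by omega : 0 < n)]
    simp only [Nat.reduceAdd, Nat.reduceSub, Nat.cast_ofNat, Nat.cast_zero, Nat.cast_one,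
      Nat.add_sub_cancel]
    ring
  · linear_combination (pt ξ t u - pu η t u + pu ξ t u * v) * hvFv

section Bracket

variable {n : ℕ} {f : ℕ → ℝ → ℝ} {ξ η : ℝ → ℝ → ℝ} {t u v : ℝ}

lemma hasFDerivAt_S1fun (hf : ∀ k ≤ n, DifferentiableAt ℝ (f k) u) :
    HasFDerivAt (S1fun n f)
      ((0 : ℝ × ℝ × ℝ →L[ℝ] ℝ).prod (coordV.prod
        ((∑ k ∈ Finset.range (n + 1), deriv (f k) u * v ^ k) • coordU
          + (∑ k ∈ Finset.range (n + 1), (k : ℝ) * f k u * v ^ (k - 1)) • coordV))) (t, u, v) :=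
  (hasFDerivAt_const 1 _).prodMk (coordV.hasFDerivAt.prodMk (hasFDerivAt_sum_mul_pow _
    fun k hk => hf k (Nat.lt_succ_iff.mp (Finset.mem_range.mp hk))))

lemma lieBracket_X1fun_sub_smul_S1fun (hn : 4 ≤ n)
    (hξ : ContDiffAt ℝ 2 (Function.uncurry ξ) (t, u))
    (hη : ContDiffAt ℝ 2 (Function.uncurry η) (t, u)) (hf : ∀ k ≤ n, DifferentiableAt ℝ (f k) u) :
    lieBracket (fun p => X1fun ξ η p - ξ p.1 p.2.1 • S1fun n f p) (S1fun n f) (t, u, v)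
      = (0, 0, symE n f ξ η t u v) := by
  have hξ₀ := hasFDerivAt_comp_coordTU (v := v) (hξ.differentiableAt (by simp))
  have hξt := hasFDerivAt_comp_coordTU (v := v)
    ((hξ.uncurry_pt (m := 1)).differentiableAt (by simp))
  have hξu := hasFDerivAt_comp_coordTU (v := v)
    ((hξ.uncurry_pu (m := 1)).differentiableAt (by simp))
  have hη₀ := hasFDerivAt_comp_coordTU (v := v) (hη.differentiableAt (by simp))
  have hηt := hasFDerivAt_comp_coordTU (v := v)
    ((hη.uncurry_pt (m := 1)).differentiableAt (by simp))
  have hηu := hasFDerivAt_comp_coordTU (v := v)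
    ((hη.uncurry_pu (m := 1)).differentiableAt (by simp))
  have hv := coordV.hasFDerivAt (x := (t, u, v))
  have hX1 : HasFDerivAt (X1fun ξ η) _ (t, u, v) := hξ₀.prodMk (hη₀.prodMk
    ((hηt.add ((hηu.sub hξt).mul hv)).sub (hξu.mul (hv.pow 2))))
  have hS1 := hasFDerivAt_S1fun (t := t) (v := v) hf
  have hY : HasFDerivAt (fun p => X1fun ξ η p - ξ p.1 p.2.1 • S1fun n f p) _ (t, u, v) :=
    hX1.sub (hξ₀.smul hS1)
  rw [lieBracket, hY.fderiv, hS1.fderiv, symE_eq hn]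
  ext <;>
  simp only [X1fun, S1fun, pt_pu_comm hξ, pt_pu_comm hη, Prod.smul_mk, Prod.mk_sub_mk,
    Prod.mk_add_mk, Pi.sub_apply, ContinuousLinearMap.prod_apply, zero_apply, add_apply,
    sub_apply, smul_apply, ContinuousLinearMap.smulRight_apply, coordT_apply, coordU_apply,
    coordV_apply, smul_add, smul_eq_mul, nsmul_eq_mul, Nat.cast_ofNat, Nat.add_one_sub_one,
    pow_one, sub_self, mul_zero, mul_one, zero_add] <;>
  ring

end Bracket

theorem stmt0_general (n : ℕ) (hn : 4 ≤ n) (I : Set ℝ) (hI : IsOpen I)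
    (f : ℕ → ℝ → ℝ) (hf : ∀ k ≤ n, ContDiffOn ℝ 2 (f k) I)
    (ξ η : ℝ → ℝ → ℝ)
    (hξ : ContDiffOn ℝ 2 (Function.uncurry ξ) (Set.univ ×ˢ I))
    (hη : ContDiffOn ℝ 2 (Function.uncurry η) (Set.univ ×ˢ I)) :
    (∀ t v : ℝ, ∀ u ∈ I,
      lieBracket (fun p => X1fun ξ η p - ξ p.1 p.2.1 • S1fun n f p) (S1fun n f) (t, u, v)
        = ((0 : ℝ), (0 : ℝ), symE n f ξ η t u v)) ∧
    ((∀ t v : ℝ, ∀ u ∈ I,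
        lieBracket (fun p => X1fun ξ η p - ξ p.1 p.2.1 • S1fun n f p) (S1fun n f) (t, u, v) = 0)
      ↔ (∀ t v : ℝ, ∀ u ∈ I, symE n f ξ η t u v = 0)) := by
  have hbracket : ∀ t v : ℝ, ∀ u ∈ I,
      lieBracket (fun p => X1fun ξ η p - ξ p.1 p.2.1 • S1fun n f p) (S1fun n f) (t, u, v)
        = ((0 : ℝ), (0 : ℝ), symE n f ξ η t u v) := by
    intro t v u hu
    have hstrip : Set.univ ×ˢ I ∈ 𝓝 (t, u) := (isOpen_univ.prod hI).mem_nhds ⟨trivial, hu⟩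
    exact lieBracket_X1fun_sub_smul_S1fun hn (hξ.contDiffAt hstrip) (hη.contDiffAt hstrip)
      fun k hk => ((hf k hk).contDiffAt (hI.mem_nhds hu)).differentiableAt (by simp)
  refine ⟨hbracket, forall₂_congr fun t v => forall₂_congr fun u hu => ?_⟩
  simp [hbracket t v u hu]

theorem stmt0 (n : ℕ) (hn : 4 ≤ n) (I : Set ℝ) (hI : IsOpen I) (hIc : I.OrdConnected)
    (f : ℕ → ℝ → ℝ) (hf : ∀ k ≤ n, ContDiffOn ℝ 2 (f k) I) (hfz : ∀ k, n < k → f k = 0)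
    (ξ η : ℝ → ℝ → ℝ)
    (hξ : ContDiffOn ℝ 2 (Function.uncurry ξ) (Set.univ ×ˢ I))
    (hη : ContDiffOn ℝ 2 (Function.uncurry η) (Set.univ ×ˢ I)) :
    (∀ t v : ℝ, ∀ u ∈ I,
      lieBracket (fun p => X1fun ξ η p - ξ p.1 p.2.1 • S1fun n f p) (S1fun n f) (t, u, v)
        = ((0 : ℝ), (0 : ℝ), symE n f ξ η t u v)) ∧
    ((∀ t v : ℝ, ∀ u ∈ I,
        lieBracket (fun p => X1fun ξ η p - ξ p.1 p.2.1 • S1fun n f p) (S1fun n f) (t, u, v) = 0)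
      ↔ (∀ t v : ℝ, ∀ u ∈ I, symE n f ξ η t u v = 0)) :=
  stmt0_general n hn I hI f hf ξ η hξ hη
end

section
/- Suppose (a, U, F) satisfies conditions (C) with a = 0, and set g := ((n−2)F)/((n−1)F'). Then the pair ξ(t,u) := t, η(t,u) := g(u) satisfies the symmetry condition (SC) at all (t,u,v) ∈ ℝ × U × ℝ. (That is, t∂_t + g(u)∂_u is an infinitesimal Lie point symmetry of ü = Σ_{k=0}^n f_k(u)u̇^k on U.) -/
/-- The symmetry condition (SC) on `ℝ × U × ℝ`. -/
def SC (n : ℕ) (f : ℕ → ℝ → ℝ) (ξ η : ℝ → ℝ → ℝ) (U : Set ℝ) : Prop :=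
  ∀ t : ℝ, ∀ u ∈ U, ∀ v : ℝ, symE n f ξ η t u v = 0

/-- The function `g = ((n−2)F)/((n−1)F')`. -/
noncomputable def gFun (n : ℕ) (F : ℝ → ℝ) (u : ℝ) : ℝ :=
  (((n : ℝ) - 2) * F u) / (((n : ℝ) - 1) * deriv F u)

/-- The system (E0)-(Ek) of equations on `U`. -/
def Esys (n : ℕ) (f : ℕ → ℝ → ℝ) (a : ℝ) (U : Set ℝ) (g : ℝ → ℝ) : Prop :=
  (∀ u ∈ U, -a ^ 2 * g u + deriv (f 0) u * g u + a * f 1 u * g u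
      - f 0 u * deriv g u + 2 * f 0 u = 0) ∧
  (∀ u ∈ U, a * (1 - 2 * deriv g u) + deriv (f 1) u * g u
      + 2 * a * f 2 u * g u + f 1 u = 0) ∧
  (∀ u ∈ U, -(deriv (deriv g) u) + deriv (f 2) u * g u
      + 3 * a * f 3 u * g u + f 2 u * deriv g u = 0) ∧
  (∀ k : ℕ, 3 ≤ k → k ≤ n - 1 → ∀ u ∈ U,
      deriv (f k) u * g u + ((k : ℝ) + 1) * a * f (k + 1) u * g u
        + ((k : ℝ) - 1) * f k u * deriv g u + (2 - (k : ℝ)) * f k u = 0)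

/-- Conditions (C) for the triple `(a, U, F)`:  `F` is three-times differentiable on `U`,
`f n` and `F` do not vanish on `U`, `F' = |f n| ^ (1/(n-1))` on `U`, and the system
(E0)-(Ek) holds on `U` with `g = ((n−2)F)/((n−1)F')`. -/
def CondC (n : ℕ) (f : ℕ → ℝ → ℝ) (a : ℝ) (U : Set ℝ) (F : ℝ → ℝ) : Prop :=
  (∀ u ∈ U, DifferentiableAt ℝ F u) ∧
  (∀ u ∈ U, DifferentiableAt ℝ (deriv F) u) ∧
  (∀ u ∈ U, DifferentiableAt ℝ (deriv (deriv F)) u) ∧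
  (∀ u ∈ U, f n u ≠ 0) ∧
  (∀ u ∈ U, F u ≠ 0) ∧
  (∀ u ∈ U, deriv F u = |f n u| ^ ((1 : ℝ) / ((n : ℝ) - 1))) ∧
  Esys n f a U (gFun n F)

/-- The reduced system (S) on `ℝ × U` for `ξ : ℝ → ℝ` and `η : ℝ → ℝ → ℝ`. -/
def SysS (n : ℕ) (f : ℕ → ℝ → ℝ) (ξ : ℝ → ℝ) (η : ℝ → ℝ → ℝ) (U : Set ℝ) : Prop :=
  (∀ t : ℝ, ∀ u ∈ U, -(pt (pt η) t u) + deriv (f 0) u * η t u + f 1 u * pt η t u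
      - f 0 u * pu η t u + 2 * f 0 u * deriv ξ t = 0) ∧
  (∀ t : ℝ, ∀ u ∈ U, deriv (deriv ξ) t - 2 * pu (pt η) t u + deriv (f 1) u * η t u
      + 2 * f 2 u * pt η t u + f 1 u * deriv ξ t = 0) ∧
  (∀ t : ℝ, ∀ u ∈ U, -(pu (pu η) t u) + deriv (f 2) u * η t u + 3 * f 3 u * pt η t u
      + f 2 u * pu η t u = 0) ∧
  (∀ k : ℕ, 3 ≤ k → k ≤ n - 1 → ∀ t : ℝ, ∀ u ∈ U,
      deriv (f k) u * η t u + ((k : ℝ) + 1) * f (k + 1) u * pt η t u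
        + ((k : ℝ) - 1) * f k u * pu η t u + (2 - (k : ℝ)) * f k u * deriv ξ t = 0) ∧
  (∀ t : ℝ, ∀ u ∈ U, deriv (f n) u * η t u + ((n : ℝ) - 1) * f n u * pu η t u
      + (2 - (n : ℝ)) * f n u * deriv ξ t = 0)

/-!
For `ξ = t`, `η = g(u)` the expression in (SC) is a polynomial in `v` whose coefficients of
`v^0, …, v^(n-1)` are exactly the left-hand sides of (E0)–(E(n-1)) at `a = 0`. Only the
coefficient of `v^n`, namely `f_n' g + (n-1) f_n g' + (2-n) f_n`, is left. Since `F'^(n-1) = |f_n|`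
and `f_n` keeps its sign near each point, `f_n' F' = (n-1) f_n F''`; together with
`g' = (n-2)/(n-1) · (1 - F F''/F'^2)` this makes the last coefficient vanish.
-/

open Filter Topology

lemma eventuallyEq_sign_mul_abs {h : ℝ → ℝ} {u : ℝ} (hh : ContinuousAt h u) (hu : h u ≠ 0) :
    h =ᶠ[𝓝 u] fun x => (SignType.sign (h u) : ℝ) * |h x| := by
  rcases hu.lt_or_gt with hneg | hpos
  · filter_upwards [hh.eventually_lt_const hneg] with x hx
    simp [sign_neg hneg, abs_of_neg hx]
  · filter_upwards [hh.eventually_const_lt hpos] with x hx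
    simp [sign_pos hpos, abs_of_pos hx]

theorem deriv_mul_eq_of_pow_eq_abs {φ h : ℝ → ℝ} {u : ℝ} (m : ℕ)
    (hφ : DifferentiableAt ℝ φ u) (hh : ContinuousAt h u) (hu : h u ≠ 0)
    (hpow : ∀ᶠ x in 𝓝 u, φ x ^ m = |h x|) :
    deriv h u * φ u = m * h u * deriv φ u := by
  have hloc : h =ᶠ[𝓝 u] fun x => (SignType.sign (h u) : ℝ) * φ x ^ m :=
    (eventuallyEq_sign_mul_abs hh hu).trans (hpow.mono fun x hx => by simp only [hx])
  generalize (SignType.sign (h u) : ℝ) = c at hloc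
  rw [hloc.deriv_eq, ((hφ.hasDerivAt.fun_pow m).const_mul _).deriv, hloc.eq_of_nhds]
  cases m with
  | zero => simp
  | succ k => push_cast; ring

theorem deriv_mul_gFun_add_eq_zero {n : ℕ} (hn : n ≠ 1) {F f : ℝ → ℝ} {u : ℝ}
    (hF : DifferentiableAt ℝ F u) (hF' : DifferentiableAt ℝ (deriv F) u)
    (hF'ne : deriv F u ≠ 0)
    (hf : deriv f u * deriv F u = ((n : ℝ) - 1) * f u * deriv (deriv F) u) :
    deriv f u * gFun n F u + ((n : ℝ) - 1) * f u * deriv (gFun n F) u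
      + (2 - (n : ℝ)) * f u = 0 := by
  have hn1 : (n : ℝ) - 1 ≠ 0 := sub_ne_zero.mpr (by exact_mod_cast hn)
  have hg : HasDerivAt (gFun n F)
      ((((n : ℝ) - 2) * deriv F u * (((n : ℝ) - 1) * deriv F u)
        - ((n : ℝ) - 2) * F u * (((n : ℝ) - 1) * deriv (deriv F) u))
        / (((n : ℝ) - 1) * deriv F u) ^ 2) u :=
    (hF.hasDerivAt.const_mul _).div (hF'.hasDerivAt.const_mul _) (mul_ne_zero hn1 hF'ne)
  rw [hg.deriv, gFun]
  linear_combination (norm := skip)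
    (((n : ℝ) - 2) * F u / (((n : ℝ) - 1) * deriv F u ^ 2)) * hf
  field_simp
  ring

theorem symE_eq_zero_of_Esys {n : ℕ} (hn : 4 ≤ n) {f : ℕ → ℝ → ℝ} {U : Set ℝ} {g : ℝ → ℝ}
    (hE : Esys n f 0 U g) {u : ℝ} (hu : u ∈ U)
    (htop : deriv (f n) u * g u + ((n : ℝ) - 1) * f n u * deriv g u + (2 - (n : ℝ)) * f n u = 0)
    (t v : ℝ) : symE n f (fun t _ => t) (fun _ u => g u) t u v = 0 := by
  obtain ⟨hE0, hE1, hE2, hEk⟩ := hE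
  simp only [symE, pt, pu, deriv_const', deriv_id'']
  rw [show (fun x => g x) = g from rfl,
    Finset.sum_eq_zero fun k hk => by
      rw [Finset.mem_Icc] at hk
      linear_combination v ^ k * hEk k (by omega) hk.2 u hu]
  linear_combination hE0 u hu + v * hE1 u hu + v ^ 2 * hE2 u hu
    + v ^ 3 * hEk 3 le_rfl (by omega) u hu + v ^ n * htop

theorem stmt2_general (n : ℕ) (hn : 4 ≤ n) (I : Set ℝ)
    (f : ℕ → ℝ → ℝ) (hf : ∀ k ≤ n, ContDiffOn ℝ 2 (f k) I)
    (U : Set ℝ) (hUI : U ⊆ I) (hU : IsOpen U)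
    (F : ℝ → ℝ) (hC : CondC n f 0 U F) :
    SC n f (fun t _ => t) (fun _ u => gFun n F u) U := by
  obtain ⟨hF, hF', -, hfn, -, hFd, hE⟩ := hC
  intro t u hu v
  have hn1 : ((n - 1 : ℕ) : ℝ) = (n : ℝ) - 1 := by rw [Nat.cast_sub (by omega), Nat.cast_one]
  have hpow : ∀ x ∈ U, deriv F x ^ (n - 1) = |f n x| := fun x hx => by
    rw [hFd x hx, one_div, ← hn1]
    exact Real.rpow_inv_natCast_pow (abs_nonneg _) (by omega)
  have hfn_cont : ContinuousAt (f n) u :=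
    (hf n le_rfl).continuousOn.continuousAt (mem_of_superset (hU.mem_nhds hu) hUI)
  have hlog := deriv_mul_eq_of_pow_eq_abs (n - 1) (hF' u hu) hfn_cont (hfn u hu)
    (eventually_of_mem (hU.mem_nhds hu) hpow)
  refine symE_eq_zero_of_Esys hn hE hu ?_ t v
  have hF'ne : deriv F u ≠ 0 := by
    rw [hFd u hu]
    exact (Real.rpow_pos_of_pos (abs_pos.mpr (hfn u hu)) _).ne'
  exact deriv_mul_gFun_add_eq_zero (by omega) (hF u hu) (hF' u hu) hF'ne (by rwa [hn1] at hlog)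

theorem stmt2 (n : ℕ) (hn : 4 ≤ n) (I : Set ℝ) (hI : IsOpen I) (hIc : I.OrdConnected)
    (f : ℕ → ℝ → ℝ) (hf : ∀ k ≤ n, ContDiffOn ℝ 2 (f k) I) (hfz : ∀ k, n < k → f k = 0)
    (U : Set ℝ) (hUI : U ⊆ I) (hU : IsOpen U) (hUc : U.OrdConnected)
    (F : ℝ → ℝ) (hC : CondC n f 0 U F) :
    SC n f (fun t _ => t) (fun _ u => gFun n F u) U :=
  stmt2_general n hn I f hf U hUI hU F hC
end

section
/- Suppose (a, U, F) satisfies conditions (C) with a ≠ 0, and set g := ((n−2)F)/((n−1)F'). Then the pair ξ(t,u) := e^{at}, η(t,u) := a·e^{at}·g(u) satisfies the symmetry condition (SC) at all (t,u,v) ∈ ℝ × U × ℝ. (That is, e^{at}∂_t + a·e^{at}g(u)∂_u is an infinitesimal Lie point symmetry of ü = Σ_{k=0}^n f_k(u)u̇^k on U.) -/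
open Real Filter Topology in
private lemma En_eq_aux (n : ℕ) (hn : 4 ≤ n) (f : ℕ → ℝ → ℝ) (I : Set ℝ) (hI : IsOpen I)
    (hfc : ContinuousOn (f n) I) (U : Set ℝ) (hUI : U ⊆ I) (hU : IsOpen U)
    (F : ℝ → ℝ) (hF1 : ∀ u ∈ U, DifferentiableAt ℝ F u)
    (hF2 : ∀ u ∈ U, DifferentiableAt ℝ (deriv F) u)
    (hfnz : ∀ u ∈ U, f n u ≠ 0)
    (hFd : ∀ u ∈ U, deriv F u = |f n u| ^ ((1:ℝ)/((n:ℝ)-1)))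
    (u : ℝ) (hu : u ∈ U) :
    deriv (f n) u * gFun n F u + ((n:ℝ)-1) * f n u * deriv (gFun n F) u
      + (2-(n:ℝ)) * f n u = 0 := by
  have hn1 : ((n-1 : ℕ):ℝ) = (n:ℝ) - 1 := by
    have : (1:ℕ) ≤ n := by omega
    push_cast [this]; ring
  have hn1ne : ((n:ℝ) - 1) ≠ 0 := by
    have : (4:ℝ) ≤ (n:ℝ) := by exact_mod_cast hn
    linarith
  have hpow : ∀ x ∈ U, (deriv F x) ^ (n-1) = |f n x| := by
    intro x hx
    rw [hFd x hx, ← Real.rpow_natCast (|f n x| ^ ((1:ℝ)/((n:ℝ)-1))) (n-1),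
      ← Real.rpow_mul (abs_nonneg _)]
    rw [hn1]
    rw [show (1:ℝ)/((n:ℝ)-1) * ((n:ℝ)-1) = 1 by field_simp]
    exact Real.rpow_one _
  have hepos : ∀ x ∈ U, 0 < deriv F x := by
    intro x hx
    rw [hFd x hx]
    exact Real.rpow_pos_of_pos (abs_pos.2 (hfnz x hx)) _
  set e := deriv F u with he
  set D := deriv (deriv F) u with hD
  set P := F u with hP
  have hene : e ≠ 0 := ne_of_gt (hepos u hu)
  set s : ℝ := if 0 < f n u then 1 else -1 with hs
  have habs : f n u = s * |f n u| := by
    rcases lt_trichotomy (f n u) 0 with h|h|h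
    · rw [hs, if_neg (by linarith), abs_of_neg h]; ring
    · exact absurd h (hfnz u hu)
    · rw [hs, if_pos h, abs_of_pos h]; ring
  have hcont : ContinuousAt (f n) u := hfc.continuousAt (hI.mem_nhds (hUI hu))
  have hevsign : ∀ᶠ x in 𝓝 u, f n x = s * |f n x| := by
    rcases lt_trichotomy (f n u) 0 with h|h|h
    · filter_upwards [hcont.eventually_lt continuousAt_const h] with x hx
      rw [hs, if_neg (by linarith), abs_of_neg hx]; ring
    · exact absurd h (hfnz u hu)
    · filter_upwards [continuousAt_const.eventually_lt hcont h] with x hx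
      rw [hs, if_pos h, abs_of_pos hx]; ring
  have hev : f n =ᶠ[𝓝 u] fun x => s * (deriv F x) ^ (n-1) := by
    filter_upwards [hevsign, hU.mem_nhds hu] with x h1 h2
    rw [h1, hpow x h2]
  have hdpow : HasDerivAt (fun x => s * (deriv F x) ^ (n-1))
      (s * (((n-1:ℕ):ℝ) * e ^ (n-1-1) * D)) u :=
    (((hF2 u hu).hasDerivAt).pow (n-1)).const_mul s
  have hdfn : deriv (f n) u = s * (((n:ℝ)-1) * e ^ (n-2) * D) := by
    rw [hev.deriv_eq, hdpow.deriv, hn1, show n-1-1 = n-2 from by omega]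
  have hfnu : f n u = s * (e ^ (n-2) * e) := by
    rw [habs, ← hpow u hu, ← pow_succ]
    congr 2
    omega
  have hdg : HasDerivAt (gFun n F)
      (((((n:ℝ)-2) * e) * (((n:ℝ)-1) * e) - (((n:ℝ)-2) * P) * (((n:ℝ)-1) * D))
        / (((n:ℝ)-1) * e) ^ 2) u := by
    have h1 : HasDerivAt (fun x => ((n:ℝ)-2) * F x) (((n:ℝ)-2) * e) u :=
      (hF1 u hu).hasDerivAt.const_mul _
    have h2 : HasDerivAt (fun x => ((n:ℝ)-1) * deriv F x) (((n:ℝ)-1) * D) u :=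
      (hF2 u hu).hasDerivAt.const_mul _
    exact h1.div h2 (by positivity)
  have hgu : gFun n F u = ((n:ℝ)-2) * P / (((n:ℝ)-1) * e) := rfl
  rw [hdfn, hfnu, hdg.deriv, hgu]
  field_simp
  ring

theorem stmt3 (n : ℕ) (hn : 4 ≤ n) (I : Set ℝ) (hI : IsOpen I) (hIc : I.OrdConnected)
    (f : ℕ → ℝ → ℝ) (hf : ∀ k ≤ n, ContDiffOn ℝ 2 (f k) I) (hfz : ∀ k, n < k → f k = 0)
    (U : Set ℝ) (hUI : U ⊆ I) (hU : IsOpen U) (hUc : U.OrdConnected)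
    (a : ℝ) (ha : a ≠ 0)
    (F : ℝ → ℝ) (hC : CondC n f a U F) :
    SC n f (fun t _ => Real.exp (a * t))
      (fun t u => a * Real.exp (a * t) * gFun n F u) U := by
  obtain ⟨hF1, hF2, hF3, hfnz, hFz, hFd, hE0, hE1, hE2, hE3⟩ := hC
  set g := gFun n F with hgdef
  set ξ : ℝ → ℝ → ℝ := fun t _ => Real.exp (a * t) with hξ
  set η : ℝ → ℝ → ℝ := fun t u => a * Real.exp (a * t) * g u with hη
  have hexp : ∀ t : ℝ, HasDerivAt (fun s => Real.exp (a*s)) (Real.exp (a*t) * a) t := by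
    intro t
    simpa using ((hasDerivAt_id t).const_mul a).exp
  have hptξ : ∀ t u : ℝ, pt ξ t u = Real.exp (a*t) * a := by
    intro t u; exact (hexp t).deriv
  have hptptξ : ∀ t u : ℝ, pt (pt ξ) t u = Real.exp (a*t) * a * a := by
    intro t u
    have h : (fun s => pt ξ s u) = fun s => Real.exp (a*s) * a :=
      funext fun s => hptξ s u
    rw [pt, h]
    exact ((hexp t).mul_const a).deriv
  have hpuξ : ∀ t u : ℝ, pu ξ t u = 0 := by
    intro t u; exact deriv_const u _
  have hpuptξ : ∀ t u : ℝ, pu (pt ξ) t u = 0 := by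
    intro t u
    have h : (fun x => pt ξ t x) = fun _ => Real.exp (a*t) * a :=
      funext fun x => hptξ t x
    rw [pu, h]
    exact deriv_const u _
  have hpupuξ : ∀ t u : ℝ, pu (pu ξ) t u = 0 := by
    intro t u
    have h : (fun x => pu ξ t x) = fun _ => (0:ℝ) := funext fun x => hpuξ t x
    rw [pu, h]
    exact deriv_const u _
  have hptη : ∀ t u : ℝ, pt η t u = a * (Real.exp (a*t) * a) * g u := by
    intro t u
    exact (((hexp t).const_mul a).mul_const (g u)).deriv
  have hptptη : ∀ t u : ℝ, pt (pt η) t u = a * (Real.exp (a*t) * a * a) * g u := by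
    intro t u
    have h : (fun s => pt η s u) = fun s => a * (Real.exp (a*s) * a) * g u :=
      funext fun s => hptη s u
    rw [pt, h]
    exact ((((hexp t).mul_const a).const_mul a).mul_const (g u)).deriv
  have hpuη : ∀ t u : ℝ, pu η t u = a * Real.exp (a*t) * deriv g u := by
    intro t u
    exact deriv_const_mul_field _
  have hpuptη : ∀ t u : ℝ, pu (pt η) t u = a * (Real.exp (a*t) * a) * deriv g u := by
    intro t u
    have h : (fun x => pt η t x) = fun x => a * (Real.exp (a*t) * a) * g x :=
      funext fun x => hptη t x
    rw [pu, h]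
    exact deriv_const_mul_field _
  have hpupuη : ∀ t u : ℝ, pu (pu η) t u = a * Real.exp (a*t) * deriv (deriv g) u := by
    intro t u
    have h : (fun x => pu η t x) = fun x => a * Real.exp (a*t) * deriv g x :=
      funext fun x => hpuη t x
    rw [pu, h]
    exact deriv_const_mul_field _
  intro t u hu v
  have h0 := hE0 u hu
  have h1 := hE1 u hu
  have h2 := hE2 u hu
  have h3 := hE3 3 le_rfl (by omega) u hu
  have hEn := En_eq_aux n hn f I hI (hf n le_rfl).continuousOn U hUI hU F hF1 hF2 hfnz hFd u hu
  rw [← hgdef] at hEn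
  simp only [symE, hptξ, hptptξ, hpuξ, hpuptξ, hpupuξ, hptη, hptptη, hpuη, hpuptη, hpupuη]
  have hsum : (∑ k ∈ Finset.Icc 4 (n - 1),
      (deriv (f k) u * (a * Real.exp (a * t) * g u)
        + ((k : ℝ) + 1) * f (k + 1) u * (a * (Real.exp (a*t) * a) * g u)
        + ((k : ℝ) - 1) * f k u * (a * Real.exp (a*t) * deriv g u)
        + (2 - (k : ℝ)) * f k u * (Real.exp (a*t) * a)
        + (4 - (k : ℝ)) * f (k - 1) u * 0) * v ^ k) = 0 := by
    refine Finset.sum_eq_zero fun k hk => ?_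
    obtain ⟨hk4, hkn⟩ := Finset.mem_Icc.mp hk
    have h := hE3 k (by omega) hkn u hu
    linear_combination (a * Real.exp (a*t) * v^k) * h
  rw [hη]
  rw [hsum]
  linear_combination (a * Real.exp (a*t)) * h0 + (a * Real.exp (a*t) * v) * h1
    + (a * Real.exp (a*t) * v^2) * h2 + (a * Real.exp (a*t) * v^3) * h3
    + (a * Real.exp (a*t) * v^n) * hEn
end

section
/- Let U' ⊆ I be an open interval on which f_n never vanishes. Then twice continuously differentiable ξ, η : ℝ × I → ℝ satisfy the symmetry condition (SC) at every (t,u,v) ∈ ℝ × U' × ℝ if and only if ξ_u = 0 on ℝ × U' and there is a twice continuously differentiable function ξ̃ : ℝ → ℝ with ξ(t,u) = ξ̃(t) for all (t,u) ∈ ℝ × U' such that (ξ̃, η) satisfies the reduced system (S) on ℝ × U'. -/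
/-! (SC) is a polynomial identity in `v`, so every coefficient vanishes. The top one,
`(3 - n) f_n ξ_u`, forces `ξ_u = 0`; on the interval `U'` this makes `ξ` a function of `t`
alone, and then the `ξ_u`-terms drop out of the remaining coefficients, which become exactly
the equations of (S). -/

open Polynomial in
lemma coeffs_eq_zero_of_forall_eval_eq_zero {n : ℕ} (hn : 4 ≤ n) {B0 B1 B2 B3 Bn Bn1 : ℝ}
    {S : ℕ → ℝ}
    (h : ∀ v : ℝ, B0 + B1 * v + B2 * v ^ 2 + B3 * v ^ 3
      + (∑ k ∈ Finset.Icc 4 (n - 1), S k * v ^ k) + Bn * v ^ n + Bn1 * v ^ (n + 1) = 0) :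
    B0 = 0 ∧ B1 = 0 ∧ B2 = 0 ∧ B3 = 0 ∧ (∀ k, 4 ≤ k → k ≤ n - 1 → S k = 0)
      ∧ Bn = 0 ∧ Bn1 = 0 := by
  set q : ℝ[X] := C B0 + C B1 * X ^ 1 + C B2 * X ^ 2 + C B3 * X ^ 3
    + (∑ k ∈ Finset.Icc 4 (n - 1), C (S k) * X ^ k) + C Bn * X ^ n + C Bn1 * X ^ (n + 1)
  have hq : q = 0 := Polynomial.funext fun v => by
    simpa [q, eval_finsetSum] using h v
  have hcoeff (j : ℕ) : (if j = 0 then B0 else 0) + (if j = 1 then B1 else 0)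
      + (if j = 2 then B2 else 0) + (if j = 3 then B3 else 0)
      + (if j ∈ Finset.Icc 4 (n - 1) then S j else 0)
      + (if j = n then Bn else 0) + (if j = n + 1 then Bn1 else 0) = 0 := by
    have := congrArg (coeff · j) hq
    simpa only [q, coeff_add, finsetSum_coeff, coeff_C_mul, coeff_X_pow, coeff_C, mul_ite,
      mul_one, mul_zero, coeff_zero, Finset.sum_ite_eq] using this
  refine ⟨?_, ?_, ?_, ?_, fun k hk4 hkn => ?_, ?_, ?_⟩
  · simpa (disch := omega) [if_neg] using hcoeff 0
  · simpa (disch := omega) [if_neg] using hcoeff 1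
  · simpa (disch := omega) [if_neg] using hcoeff 2
  · simpa (disch := omega) [if_neg] using hcoeff 3
  · simpa (disch := omega) [if_neg, hk4, hkn] using hcoeff k
  · simpa (disch := omega) [if_neg] using hcoeff n
  · simpa (disch := omega) [if_neg] using hcoeff (n + 1)

lemma pt_eq_deriv_of_forall_eq {φ : ℝ → ℝ → ℝ} {g : ℝ → ℝ} {u : ℝ} (h : ∀ s, φ s u = g s)
    (t : ℝ) : pt φ t u = deriv g t := by
  rw [pt, funext h]

lemma pu_eq_zero_of_eqOn_const {φ : ℝ → ℝ → ℝ} {U : Set ℝ} (hU : IsOpen U) {t c : ℝ}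
    (h : ∀ x ∈ U, φ t x = c) {u : ℝ} (hu : u ∈ U) : pu φ t u = 0 := by
  have : (fun x => φ t x) =ᶠ[nhds u] fun _ => c := Filter.eventually_of_mem (hU.mem_nhds hu) h
  rw [pu, this.deriv_eq, deriv_const]

section ReducedSystem

variable {n : ℕ} {f : ℕ → ℝ → ℝ} {ξ η : ℝ → ℝ → ℝ} {ξt : ℝ → ℝ} {U : Set ℝ}

lemma pu_eq_zero_of_sc (hn : 4 ≤ n) (hfn : ∀ u ∈ U, f n u ≠ 0) (h : SC n f ξ η U) :
    ∀ t : ℝ, ∀ u ∈ U, pu ξ t u = 0 := by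
  intro t u hu
  have htop := (coeffs_eq_zero_of_forall_eval_eq_zero hn (h t u hu)).2.2.2.2.2.2
  have h3n : (3 : ℝ) - n ≠ 0 := by
    have : (4 : ℝ) ≤ n := by exact_mod_cast hn
    linarith
  simpa [h3n, hfn u hu] using htop

lemma partials_of_eq_fun_fst (hU : IsOpen U) (hconst : ∀ t : ℝ, ∀ u ∈ U, ξ t u = ξt t)
    {t u : ℝ} (hu : u ∈ U) :
    pt ξ t u = deriv ξt t ∧ pt (pt ξ) t u = deriv (deriv ξt) t ∧ pu ξ t u = 0 ∧
      pu (pt ξ) t u = 0 ∧ pu (pu ξ) t u = 0 := by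
  have hpt (x : ℝ) (hx : x ∈ U) (s : ℝ) : pt ξ s x = deriv ξt s :=
    pt_eq_deriv_of_forall_eq (fun s => hconst s x hx) s
  have hpu (x : ℝ) (hx : x ∈ U) (s : ℝ) : pu ξ s x = 0 :=
    pu_eq_zero_of_eqOn_const hU (fun y hy => hconst s y hy) hx
  exact ⟨hpt u hu t, pt_eq_deriv_of_forall_eq (hpt u hu) t, hpu u hu t,
    pu_eq_zero_of_eqOn_const hU (fun x hx => hpt x hx t) hu,
    pu_eq_zero_of_eqOn_const hU (fun x hx => hpu x hx t) hu⟩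

lemma sysS_of_sc (hn : 4 ≤ n) (hU : IsOpen U) (hconst : ∀ t : ℝ, ∀ u ∈ U, ξ t u = ξt t)
    (h : SC n f ξ η U) : SysS n f ξt η U := by
  have key (t u : ℝ) (hu : u ∈ U) := coeffs_eq_zero_of_forall_eval_eq_zero hn (h t u hu)
  refine ⟨fun t u hu => ?_, fun t u hu => ?_, fun t u hu => ?_, fun k hk3 hkn t u hu => ?_,
    fun t u hu => ?_⟩ <;>
    obtain ⟨hpt, hptt, hpu, hput, hpuu⟩ := partials_of_eq_fun_fst hU hconst (t := t) hu
  · simpa [hpt] using (key t u hu).1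
  · simpa [hpt, hptt, hpu] using (key t u hu).2.1
  · simpa [hput, hpu] using (key t u hu).2.2.1
  · rcases hk3.eq_or_lt with rfl | hk4
    · have := (key t u hu).2.2.2.1
      rw [hpuu, hpt, hpu] at this
      push_cast
      linear_combination this
    · simpa [hpt, hpu] using (key t u hu).2.2.2.2.1 k hk4 hkn
  · simpa [hpt, hpu] using (key t u hu).2.2.2.2.2.1

lemma sc_of_sysS (hn : 4 ≤ n) (hU : IsOpen U) (hconst : ∀ t : ℝ, ∀ u ∈ U, ξ t u = ξt t)
    (h : SysS n f ξt η U) : SC n f ξ η U := by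
  obtain ⟨hS0, hS1, hS2, hSk, hSn⟩ := h
  intro t u hu v
  obtain ⟨hpt, hptt, hpu, hput, hpuu⟩ := partials_of_eq_fun_fst hU hconst (t := t) hu
  have hS3 := hSk 3 le_rfl (by omega) t u hu
  have hsum : ∑ k ∈ Finset.Icc 4 (n - 1),
      (deriv (f k) u * η t u + ((k : ℝ) + 1) * f (k + 1) u * pt η t u
        + ((k : ℝ) - 1) * f k u * pu η t u + (2 - (k : ℝ)) * f k u * pt ξ t u
        + (4 - (k : ℝ)) * f (k - 1) u * pu ξ t u) * v ^ k = 0 := by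
    refine Finset.sum_eq_zero fun k hk => ?_
    obtain ⟨hk4, hkn⟩ := Finset.mem_Icc.mp hk
    rw [hpt, hpu, mul_zero, add_zero, hSk k (by omega) hkn t u hu, zero_mul]
  push_cast at hS3
  rw [symE, hsum, hpt, hptt, hpu, hput, hpuu, hS0 t u hu]
  linear_combination v * hS1 t u hu + v ^ 2 * hS2 t u hu + v ^ 3 * hS3 + v ^ n * hSn t u hu

end ReducedSystem

lemma exists_contDiff_eq_of_pu_eq_zero {I U : Set ℝ} (hUI : U ⊆ I) (hU : IsOpen U)
    (hUc : U.OrdConnected) {ξ : ℝ → ℝ → ℝ}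
    (hξ : ContDiffOn ℝ 2 (Function.uncurry ξ) (Set.univ ×ˢ I))
    (hpu : ∀ t : ℝ, ∀ u ∈ U, pu ξ t u = 0) :
    ∃ ξt : ℝ → ℝ, ContDiff ℝ 2 ξt ∧ ∀ t : ℝ, ∀ u ∈ U, ξ t u = ξt t := by
  rcases U.eq_empty_or_nonempty with rfl | ⟨u₀, hu₀⟩
  · exact ⟨0, contDiff_const, by simp⟩
  refine ⟨fun t => ξ t u₀, ?_, fun t u hu => ?_⟩
  · rw [← contDiffOn_univ]
    exact hξ.comp (contDiff_id.prodMk contDiff_const).contDiffOn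
      fun t _ => ⟨Set.mem_univ t, hUI hu₀⟩
  · have hdiff : DifferentiableOn ℝ (ξ t) U :=
      ((hξ.comp (contDiff_const.prodMk contDiff_id).contDiffOn
        fun x hx => ⟨Set.mem_univ t, hx⟩).differentiableOn (by norm_num)).mono hUI
    refine hUc.convex.is_const_of_fderivWithin_eq_zero hdiff (fun x hx => ?_) hu hu₀
    ext
    simp [fderivWithin_of_isOpen hU hx, fderiv_eq_smul_deriv,
      show deriv (ξ t) x = 0 from hpu t x hx]

theorem stmt5_general (n : ℕ) (hn : 4 ≤ n) (I : Set ℝ) (f : ℕ → ℝ → ℝ)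
    (U' : Set ℝ) (hU'I : U' ⊆ I) (hU' : IsOpen U') (hU'c : U'.OrdConnected)
    (hfn : ∀ u ∈ U', f n u ≠ 0)
    (ξ η : ℝ → ℝ → ℝ)
    (hξ : ContDiffOn ℝ 2 (Function.uncurry ξ) (Set.univ ×ˢ I)) :
    SC n f ξ η U' ↔
      ((∀ t : ℝ, ∀ u ∈ U', pu ξ t u = 0) ∧
        ∃ ξt : ℝ → ℝ, ContDiff ℝ 2 ξt ∧ (∀ t : ℝ, ∀ u ∈ U', ξ t u = ξt t) ∧
          SysS n f ξt η U') := by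
  constructor
  · intro h
    have hpu := pu_eq_zero_of_sc hn hfn h
    obtain ⟨ξt, hξt, hconst⟩ := exists_contDiff_eq_of_pu_eq_zero hU'I hU' hU'c hξ hpu
    exact ⟨hpu, ξt, hξt, hconst, sysS_of_sc hn hU' hconst h⟩
  · rintro ⟨-, ξt, -, hconst, hS⟩
    exact sc_of_sysS hn hU' hconst hS

theorem stmt5 (n : ℕ) (hn : 4 ≤ n) (I : Set ℝ) (hI : IsOpen I) (hIc : I.OrdConnected)
    (f : ℕ → ℝ → ℝ) (hf : ∀ k ≤ n, ContDiffOn ℝ 2 (f k) I) (hfz : ∀ k, n < k → f k = 0)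
    (U' : Set ℝ) (hU'I : U' ⊆ I) (hU' : IsOpen U') (hU'c : U'.OrdConnected)
    (hfn : ∀ u ∈ U', f n u ≠ 0)
    (ξ η : ℝ → ℝ → ℝ)
    (hξ : ContDiffOn ℝ 2 (Function.uncurry ξ) (Set.univ ×ˢ I))
    (hη : ContDiffOn ℝ 2 (Function.uncurry η) (Set.univ ×ˢ I)) :
    SC n f ξ η U' ↔
      ((∀ t : ℝ, ∀ u ∈ U', pu ξ t u = 0) ∧
        ∃ ξt : ℝ → ℝ, ContDiff ℝ 2 ξt ∧ (∀ t : ℝ, ∀ u ∈ U', ξ t u = ξt t) ∧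
          SysS n f ξt η U') :=
  stmt5_general n hn I f U' hU'I hU' hU'c hfn ξ η hξ
end

section
/- Let U' ⊆ I be an open interval on which f_n never vanishes, and let F : U' → ℝ be a differentiable function with F'(u) = |f_n(u)|^{1/(n−1)} for all u ∈ U'. Suppose ξ : ℝ → ℝ is differentiable, η : ℝ × U' → ℝ is differentiable in its second variable, and equation (Sn) holds: f_n'(u)·η(t,u) + (n−1)f_n(u)·η_u(t,u) + (2−n)f_n(u)·ξ'(t) = 0 for all (t,u) ∈ ℝ × U'. Then for every fixed t ∈ ℝ, the function u ↦ F'(u)·η(t,u) − ((n−2)/(n−1))·ξ'(t)·F(u) has derivative zero on U', and hence is constant on U'. In particular, ∂/∂u (|f_n(u)|^{1/(n−1)}·η(t,u)) = ((n−2)/(n−1))·|f_n(u)|^{1/(n−1)}·ξ'(t) on U'. -/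
open Filter Topology

theorem HasDerivAt.abs_rpow_const {f : ℝ → ℝ} {f' x : ℝ} (p : ℝ) (hf : HasDerivAt f f' x)
    (hx : f x ≠ 0) : HasDerivAt (fun y => |f y| ^ p) (p * |f x| ^ p / f x * f') x := by
  have habs : HasDerivAt (fun y => |f y|) (SignType.sign (f x) * f') x :=
    (hasDerivAt_abs hx).comp x hf
  convert habs.rpow_const (p := p) (Or.inl (abs_ne_zero.mpr hx)) using 1
  rw [Real.rpow_sub_one (abs_ne_zero.mpr hx)]
  rcases hx.lt_or_gt with hneg | hpos
  · simp only [sign_neg hneg, SignType.coe_neg_one, abs_of_neg hneg]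
    field_simp
  · simp only [sign_pos hpos, SignType.coe_one, abs_of_pos hpos]
    field_simp

theorem HasDerivAt.abs_rpow_one_div_mul_of_eq {f η : ℝ → ℝ} {f' η' a b x : ℝ} (ha : a ≠ 0)
    (hf : HasDerivAt f f' x) (hx : f x ≠ 0) (hη : HasDerivAt η η' x)
    (h : f' * η x + a * f x * η' = b * f x) :
    HasDerivAt (fun y => |f y| ^ (1 / a) * η y) (b / a * |f x| ^ (1 / a)) x := by
  refine ((hf.abs_rpow_const (1 / a) hx).fun_mul hη).congr_deriv ?_
  field_simp
  linear_combination h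

theorem stmt6_general (n : ℕ) (hn : 4 ≤ n) (I : Set ℝ)
    (fn : ℝ → ℝ) (hfn : ∀ u ∈ I, DifferentiableAt ℝ fn u)
    (U' : Set ℝ) (hU'I : U' ⊆ I) (hU' : IsOpen U') (hU'c : U'.OrdConnected)
    (hfn0 : ∀ u ∈ U', fn u ≠ 0)
    (F : ℝ → ℝ)
    (hF : ∀ u ∈ U', HasDerivAt F (|fn u| ^ ((1 : ℝ) / ((n : ℝ) - 1))) u)
    (ξ : ℝ → ℝ)
    (η : ℝ → ℝ → ℝ) (hη : ∀ t : ℝ, ∀ u ∈ U', DifferentiableAt ℝ (η t) u)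
    (hSn : ∀ t : ℝ, ∀ u ∈ U',
      deriv fn u * η t u + ((n : ℝ) - 1) * fn u * pu η t u
        + (2 - (n : ℝ)) * fn u * deriv ξ t = 0) :
    (∀ t : ℝ, ∀ u ∈ U',
      deriv (fun x => deriv F x * η t x - (((n : ℝ) - 2) / ((n : ℝ) - 1)) * deriv ξ t * F x) u
        = 0) ∧
    (∀ t : ℝ, ∀ u₁ ∈ U', ∀ u₂ ∈ U',
      deriv F u₁ * η t u₁ - (((n : ℝ) - 2) / ((n : ℝ) - 1)) * deriv ξ t * F u₁
        = deriv F u₂ * η t u₂ - (((n : ℝ) - 2) / ((n : ℝ) - 1)) * deriv ξ t * F u₂) ∧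
    (∀ t : ℝ, ∀ u ∈ U',
      deriv (fun x => |fn x| ^ ((1 : ℝ) / ((n : ℝ) - 1)) * η t x) u
        = (((n : ℝ) - 2) / ((n : ℝ) - 1)) * |fn u| ^ ((1 : ℝ) / ((n : ℝ) - 1)) * deriv ξ t) := by
  have hn1 : (n : ℝ) - 1 ≠ 0 := by
    have : (4 : ℝ) ≤ n := by exact_mod_cast hn
    linarith
  set c : ℝ := ((n : ℝ) - 2) / ((n : ℝ) - 1)
  have hprod : ∀ t, ∀ u ∈ U', HasDerivAt (fun x => |fn x| ^ ((1 : ℝ) / ((n : ℝ) - 1)) * η t x)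
      (c * |fn u| ^ ((1 : ℝ) / ((n : ℝ) - 1)) * deriv ξ t) u := by
    intro t u hu
    have hSn' := hSn t u hu
    unfold pu at hSn'
    refine ((hfn u (hU'I hu)).hasDerivAt.abs_rpow_one_div_mul_of_eq hn1 (hfn0 u hu)
      (hη t u hu).hasDerivAt (b := ((n : ℝ) - 2) * deriv ξ t)
      (by linear_combination hSn')).congr_deriv ?_
    ring
  have hconst : ∀ t, ∀ u ∈ U',
      HasDerivAt (fun x => deriv F x * η t x - c * deriv ξ t * F x) 0 u := by
    intro t u hu
    have hF' : (fun x => deriv F x * η t x - c * deriv ξ t * F x) =ᶠ[𝓝 u]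
        fun x => |fn x| ^ ((1 : ℝ) / ((n : ℝ) - 1)) * η t x - c * deriv ξ t * F x := by
      filter_upwards [hU'.mem_nhds hu] with x hx
      rw [(hF x hx).deriv]
    refine (((hprod t u hu).fun_sub ((hF u hu).const_mul (c * deriv ξ t))).congr_of_eventuallyEq
      hF').congr_deriv ?_
    ring
  refine ⟨fun t u hu => (hconst t u hu).deriv, fun t u₁ hu₁ u₂ hu₂ => ?_,
    fun t u hu => (hprod t u hu).deriv⟩
  exact hU'.is_const_of_deriv_eq_zero hU'c.isPreconnected
    (fun u hu => (hconst t u hu).differentiableAt.differentiableWithinAt)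
    (fun u hu => (hconst t u hu).deriv) hu₁ hu₂

theorem stmt6 (n : ℕ) (hn : 4 ≤ n) (I : Set ℝ) (hI : IsOpen I) (hIc : I.OrdConnected)
    (fn : ℝ → ℝ) (hfn : ∀ u ∈ I, DifferentiableAt ℝ fn u)
    (U' : Set ℝ) (hU'I : U' ⊆ I) (hU' : IsOpen U') (hU'c : U'.OrdConnected)
    (hfn0 : ∀ u ∈ U', fn u ≠ 0)
    (F : ℝ → ℝ)
    (hF : ∀ u ∈ U', HasDerivAt F (|fn u| ^ ((1 : ℝ) / ((n : ℝ) - 1))) u)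
    (ξ : ℝ → ℝ) (hξ : Differentiable ℝ ξ)
    (η : ℝ → ℝ → ℝ) (hη : ∀ t : ℝ, ∀ u ∈ U', DifferentiableAt ℝ (η t) u)
    (hSn : ∀ t : ℝ, ∀ u ∈ U',
      deriv fn u * η t u + ((n : ℝ) - 1) * fn u * pu η t u
        + (2 - (n : ℝ)) * fn u * deriv ξ t = 0) :
    (∀ t : ℝ, ∀ u ∈ U',
      deriv (fun x => deriv F x * η t x - (((n : ℝ) - 2) / ((n : ℝ) - 1)) * deriv ξ t * F x) u
        = 0) ∧
    (∀ t : ℝ, ∀ u₁ ∈ U', ∀ u₂ ∈ U',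
      deriv F u₁ * η t u₁ - (((n : ℝ) - 2) / ((n : ℝ) - 1)) * deriv ξ t * F u₁
        = deriv F u₂ * η t u₂ - (((n : ℝ) - 2) / ((n : ℝ) - 1)) * deriv ξ t * F u₂) ∧
    (∀ t : ℝ, ∀ u ∈ U',
      deriv (fun x => |fn x| ^ ((1 : ℝ) / ((n : ℝ) - 1)) * η t x) u
        = (((n : ℝ) - 2) / ((n : ℝ) - 1)) * |fn u| ^ ((1 : ℝ) / ((n : ℝ) - 1)) * deriv ξ t) :=
  stmt6_general n hn I fn hfn U' hU'I hU' hU'c hfn0 F hF ξ η hη hSn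
end

section
/- Let U ⊆ ℝ be an open interval, f_0, …, f_n : U → ℝ differentiable with f_n(u) ≠ 0 for all u ∈ U, and F : U → ℝ three-times differentiable with F(u) ≠ 0 and F'(u) = |f_n(u)|^{1/(n−1)} for all u ∈ U; set g := ((n−2)F)/((n−1)F'). Let a, c ∈ ℝ with c ≠ 0, let ξ : ℝ → ℝ be twice differentiable with ξ'(t) = c·e^{at} for all t, and define η(t,u) := c·e^{at}·g(u). Then (ξ, η) satisfies the reduced system (S) on ℝ × U if and only if equations (E0)–(Ek) hold on U: (E0) −a²g + f_0'g + a·f_1·g − f_0·g' + 2f_0 = 0; (E1) a(1 − 2g') + f_1'g + 2a·f_2·g + f_1 = 0; (E2) −g'' + f_2'g + 3a·f_3·g + f_2·g' = 0; (Ek) f_k'g + (k+1)a·f_{k+1}·g + (k−1)f_k·g' + (2−k)f_k = 0 for each 3 ≤ k ≤ n−1. (Equation (Sn) holds automatically from the definitions of F and g.) -/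
/-! Every `t`-derivative of `η = φ(t) g(u)` with `φ(t) = c e^{a t}` multiplies by `a`, so each
equation of (S) is `φ(t)` times the corresponding equation of (E), and `φ` never vanishes.
The remaining equation (Sn) reads `h' g + (n - 1) h g' + (2 - n) h = 0` for `h = f n`; it holds
identically because the logarithmic derivative of `F' = |h| ^ (1 / (n - 1))` is `h' / ((n - 1) h)`. -/

open Filter Topology

theorem HasDerivAt.abs_rpow_const_s8 {h : ℝ → ℝ} {h' u : ℝ} (p : ℝ) (hh : HasDerivAt h h' u)
    (hu : h u ≠ 0) : HasDerivAt (fun x => |h x| ^ p) (p * h' / h u * |h u| ^ p) u := by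
  have habs : HasDerivAt (fun x => |h x|) (h' * |h u| / h u) u := by
    rcases hu.lt_or_gt with hneg | hpos
    · refine ((hasDerivAt_abs_neg hneg).comp u hh).congr_deriv ?_
      rw [abs_of_neg hneg]
      field_simp
    · refine ((hasDerivAt_abs_pos hpos).comp u hh).congr_deriv ?_
      rw [abs_of_pos hpos]
      field_simp
  refine (habs.rpow_const (Or.inl (abs_ne_zero.2 hu))).congr_deriv ?_
  rw [Real.rpow_sub_one (abs_ne_zero.2 hu)]
  field_simp

theorem hasDerivAt_gFun {n : ℕ} {F : ℝ → ℝ} {u F'' : ℝ} (hn : (n : ℝ) - 1 ≠ 0)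
    (hF : DifferentiableAt ℝ F u) (hF' : HasDerivAt (deriv F) F'' u) (h0 : deriv F u ≠ 0) :
    HasDerivAt (gFun n F)
      (((n : ℝ) - 2) * (deriv F u ^ 2 - F u * F'') / (((n : ℝ) - 1) * deriv F u ^ 2)) u := by
  refine ((hF.hasDerivAt.const_mul ((n : ℝ) - 2)).div (hF'.const_mul ((n : ℝ) - 1))
    (mul_ne_zero hn h0)).congr_deriv ?_
  field_simp

theorem gFun_ode_of_deriv_eventuallyEq_abs_rpow {n : ℕ} {h F : ℝ → ℝ} {u : ℝ}
    (hn : (n : ℝ) - 1 ≠ 0) (hh : DifferentiableAt ℝ h u) (hu : h u ≠ 0)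
    (hF : DifferentiableAt ℝ F u)
    (hF' : deriv F =ᶠ[𝓝 u] fun x => |h x| ^ (1 / ((n : ℝ) - 1))) :
    deriv h u * gFun n F u + ((n : ℝ) - 1) * h u * deriv (gFun n F) u
      + (2 - (n : ℝ)) * h u = 0 := by
  have hF'u : deriv F u = |h u| ^ (1 / ((n : ℝ) - 1)) := hF'.eq_of_nhds
  have h0 : deriv F u ≠ 0 := by
    rw [hF'u]; exact (Real.rpow_pos_of_pos (abs_pos.2 hu) _).ne'
  have hF'' := (hh.hasDerivAt.abs_rpow_const_s8 (1 / ((n : ℝ) - 1)) hu).congr_of_eventuallyEq hF'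
  rw [(hasDerivAt_gFun hn hF hF'' h0).deriv, gFun, ← hF'u]
  field_simp
  ring

theorem pt_mul (φ g : ℝ → ℝ) : pt (fun t u => φ t * g u) = fun t u => deriv φ t * g u := by
  funext t u
  exact deriv_mul_const_field (g u)

theorem pu_mul (φ g : ℝ → ℝ) : pu (fun t u => φ t * g u) = fun t u => φ t * deriv g u := by
  funext t u
  exact deriv_const_mul_field (φ t)

theorem sysS_mul_iff_esys {n : ℕ} {f : ℕ → ℝ → ℝ} {U : Set ℝ} {ξ φ g : ℝ → ℝ} {a t₀ : ℝ}
    (hφ : deriv φ = fun t => a * φ t) (hξ : deriv ξ = φ) (ht₀ : φ t₀ ≠ 0)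
    (hSn : ∀ u ∈ U, deriv (f n) u * g u + ((n : ℝ) - 1) * f n u * deriv g u
      + (2 - (n : ℝ)) * f n u = 0) :
    SysS n f ξ (fun t u => φ t * g u) U ↔ Esys n f a U g := by
  simp only [SysS, Esys, pt_mul, pu_mul, hξ, hφ, deriv_const_mul_field']
  constructor
  · rintro ⟨s0, s1, s2, sk, -⟩
    refine ⟨fun u hu => ?_, fun u hu => ?_, fun u hu => ?_, fun k hk3 hkn u hu => ?_⟩
    · exact mul_left_cancel₀ ht₀ (by linear_combination s0 t₀ u hu)
    · exact mul_left_cancel₀ ht₀ (by linear_combination s1 t₀ u hu)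
    · exact mul_left_cancel₀ ht₀ (by linear_combination s2 t₀ u hu)
    · exact mul_left_cancel₀ ht₀ (by linear_combination sk k hk3 hkn t₀ u hu)
  · rintro ⟨e0, e1, e2, ek⟩
    refine ⟨fun t u hu => ?_, fun t u hu => ?_, fun t u hu => ?_,
      fun k hk3 hkn t u hu => ?_, fun t u hu => ?_⟩
    · linear_combination φ t * e0 u hu
    · linear_combination φ t * e1 u hu
    · linear_combination φ t * e2 u hu
    · linear_combination φ t * ek k hk3 hkn u hu
    · linear_combination φ t * hSn u hu

theorem stmt8_general (n : ℕ) (hn : 4 ≤ n)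
    (U : Set ℝ) (hU : IsOpen U)
    (f : ℕ → ℝ → ℝ) (hf : ∀ k ≤ n, ∀ u ∈ U, DifferentiableAt ℝ (f k) u)
    (hfn : ∀ u ∈ U, f n u ≠ 0)
    (F : ℝ → ℝ)
    (hF₁ : ∀ u ∈ U, DifferentiableAt ℝ F u)
    (hF' : ∀ u ∈ U, deriv F u = |f n u| ^ ((1 : ℝ) / ((n : ℝ) - 1)))
    (a c : ℝ) (hc : c ≠ 0)
    (ξ : ℝ → ℝ) (hξ : ∀ t : ℝ, HasDerivAt ξ (c * Real.exp (a * t)) t) :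
    SysS n f ξ (fun t u => c * Real.exp (a * t) * gFun n F u) U
      ↔ Esys n f a U (gFun n F) := by
  have hn1 : (n : ℝ) - 1 ≠ 0 := by
    have : (4 : ℝ) ≤ n := by exact_mod_cast hn
    linarith
  have hφ : deriv (fun t => c * Real.exp (a * t)) = fun t => a * (c * Real.exp (a * t)) := by
    funext t
    exact (((hasDerivAt_id' t).const_mul a).exp.const_mul c).deriv.trans (by ring)
  exact sysS_mul_iff_esys (t₀ := 0) hφ (funext fun t => (hξ t).deriv) (by simpa using hc)
    fun u hu => gFun_ode_of_deriv_eventuallyEq_abs_rpow hn1 (hf n le_rfl u hu) (hfn u hu)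
      (hF₁ u hu) (eventuallyEq_of_mem (hU.mem_nhds hu) hF')

theorem stmt8 (n : ℕ) (hn : 4 ≤ n)
    (U : Set ℝ) (hU : IsOpen U) (hUc : U.OrdConnected)
    (f : ℕ → ℝ → ℝ) (hf : ∀ k ≤ n, ∀ u ∈ U, DifferentiableAt ℝ (f k) u)
    (hfz : ∀ k, n < k → f k = 0)
    (hfn : ∀ u ∈ U, f n u ≠ 0)
    (F : ℝ → ℝ)
    (hF₁ : ∀ u ∈ U, DifferentiableAt ℝ F u)
    (hF₂ : ∀ u ∈ U, DifferentiableAt ℝ (deriv F) u)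
    (hF₃ : ∀ u ∈ U, DifferentiableAt ℝ (deriv (deriv F)) u)
    (hFne : ∀ u ∈ U, F u ≠ 0)
    (hF' : ∀ u ∈ U, deriv F u = |f n u| ^ ((1 : ℝ) / ((n : ℝ) - 1)))
    (a c : ℝ) (hc : c ≠ 0)
    (ξ : ℝ → ℝ) (hξ : ∀ t : ℝ, HasDerivAt ξ (c * Real.exp (a * t)) t) :
    SysS n f ξ (fun t u => c * Real.exp (a * t) * gFun n F u) U
      ↔ Esys n f a U (gFun n F) :=
  stmt8_general n hn U hU f hf hfn F hF₁ hF' a c hc ξ hξ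
end
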